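/- Let A ⊆ ℕ satisfy the hypotheses of the main theorem: there exist δ > 0 and 1/2 < α ≤ 1 with |A ∩ [0, N−1]| = δ·N^α for arbitrarily large N, and there exist C > 0 and β with 2/3 < β ≤ 1 and β > 2 − 2α such that for all such sufficiently large N and all 1 ≤ k ≤ N−1, |χ̂_{A_N}(k)| ≤ C·(min(k, N−k)·N)^{−β/2}, where A_N = A ∩ [0, N−1]. Then there exist c > 0 and N₀ such that for all admissible N ≥ N₀ (with N odd), Λ₃(χ_{A_N}, χ_{A_N}, χ_{A_N}) ≥ c·N^{3α−3}, where χ_{A_N} is regarded as a function on ℤ/Nℤ. -/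

import Mathlib

open Complex Real Finset

/-- Discrete Fourier coefficient of the characteristic function of `A ∩ [0, N-1]`. -/
noncomputable def natFourier (A : Set ℕ) (N : ℕ) (k : ℤ) : ℂ :=
  (N : ℂ)⁻¹ * ∑ n ∈ Finset.range N,
    (A.indicator (fun _ => (1 : ℂ)) n) *
      Complex.exp (-(2 * Real.pi * Complex.I * k * n) / N)

/-- The trilinear form `Λ₃(f,g,h) = (1/N²) ∑_{x,r} f(x) g(x+r) h(x+2r)` on `ℤ/Nℤ`. -/
noncomputable def lambda3 (N : ℕ) (f g h : ZMod N → ℂ) : ℂ :=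
  ((N : ℂ) ^ 2)⁻¹ * ∑ x ∈ Finset.range N, ∑ r ∈ Finset.range N,
    f x * g ((x : ZMod N) + r) * h ((x : ZMod N) + 2 * r)

/-- The characteristic function of `A ∩ [0, N-1]`, regarded as a function on `ℤ/Nℤ`. -/
noncomputable def chiZMod (A : Set ℕ) (N : ℕ) : ZMod N → ℂ :=
  fun x => A.indicator (fun _ => (1 : ℂ)) x.val

/-!
Expanding in Fourier series, `Λ₃(f, f, f) = ∑ₖ f̂(k)² f̂(-2k)`. The term `k = 0` is
`(|A_N| / N)³ = δ³ N^{3α-3}`. For odd `N` multiplication by `-2` permutes the nonzero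
residues, so by AM-GM the other terms contribute at most `∑_{k ≠ 0} |f̂(k)|³`, which the
Fourier decay bounds by `2 C³ ζ(3β/2) N^{-3β/2}`; this is `o(N^{3α-3})` because `β > 2 - 2α`.
-/

open Filter
open scoped ZMod

theorem sum_range_eq_sum_zmod {M : Type*} [AddCommMonoid M] (N : ℕ) [NeZero N]
    (h : ZMod N → M) : ∑ n ∈ range N, h n = ∑ x : ZMod N, h x :=
  Finset.sum_nbij' (↑) ZMod.val (fun _ _ ↦ mem_univ _) (fun x _ ↦ mem_range.2 x.val_lt)
    (fun _ hn ↦ ZMod.val_cast_of_lt (mem_range.1 hn)) (fun x _ ↦ ZMod.natCast_zmod_val x)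
    (fun _ _ ↦ rfl)

theorem lambda3_eq_sum_dft (N : ℕ) [NeZero N] (f g h : ZMod N → ℂ) :
    lambda3 N f g h = ∑ k, ((N : ℂ)⁻¹ * 𝓕 f k) * ((N : ℂ)⁻¹ * 𝓕 g (-(2 * k))) *
      ((N : ℂ)⁻¹ * 𝓕 h k) := by
  have hsum : ∑ x ∈ range N, ∑ r ∈ range N, f x * g (x + r) * h (x + 2 * r) =
      ∑ a, ∑ c, f a * g c * h (2 * c - a) := by
    rw [sum_range_eq_sum_zmod N fun x ↦ ∑ r ∈ range N, f x * g (x + r) * h (x + 2 * r)]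
    refine sum_congr rfl fun x _ ↦ ?_
    rw [sum_range_eq_sum_zmod N fun r ↦ f x * g (x + r) * h (x + 2 * r)]
    exact Fintype.sum_equiv (Equiv.addLeft x) _ _ fun r ↦ by
      simp only [Equiv.coe_addLeft]; ring_nf
  have hinv (a c : ZMod N) : h (2 * c - a) = (N : ℂ)⁻¹ *
      ∑ k, ZMod.stdAddChar (-(a * k)) * ZMod.stdAddChar (-(c * -(2 * k))) * 𝓕 h k := by
    conv_lhs => rw [← (ZMod.dft (E := ℂ)).symm_apply_apply h, ZMod.invDFT_apply]
    simp only [smul_eq_mul, ← AddChar.map_add_eq_mul]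
    congr 1
    exact sum_congr rfl fun k _ ↦ by ring_nf
  rw [lambda3, hsum]
  simp only [hinv, ZMod.dft_apply f, ZMod.dft_apply g, smul_eq_mul, mul_sum, sum_mul]
  rw [sum_comm, sum_comm_cycle]
  refine sum_congr rfl fun k _ ↦ sum_congr rfl fun c _ ↦ sum_congr rfl fun a _ ↦ ?_
  ring

theorem dft_chiZMod (A : Set ℕ) (N : ℕ) [NeZero N] (k : ZMod N) :
    (N : ℂ)⁻¹ * 𝓕 (chiZMod A N) k = natFourier A N k.val := by
  rw [natFourier, ZMod.dft_apply, ← sum_range_eq_sum_zmod]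
  congr 1
  refine sum_congr rfl fun n hn ↦ ?_
  have hchar : ZMod.stdAddChar (-((n : ZMod N) * k)) =
      Complex.exp (-(2 * π * I * (k.val : ℤ) * n) / N) := by
    have hcast : -((n : ZMod N) * k) = ((-(n * k.val : ℤ) : ℤ) : ZMod N) := by
      push_cast [ZMod.natCast_zmod_val]; ring
    rw [hcast, ZMod.stdAddChar_coe]
    push_cast
    ring_nf
  rw [chiZMod, ZMod.val_cast_of_lt (mem_range.1 hn), hchar, smul_eq_mul, mul_comm]

theorem dft_chiZMod_zero (A : Set ℕ) (N : ℕ) [NeZero N] :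
    𝓕 (chiZMod A N) 0 = Nat.card ↥(A ∩ Set.Ico 0 N) := by
  classical
  rw [ZMod.dft_apply_zero, ← sum_range_eq_sum_zmod]
  have hA : A ∩ Set.Ico 0 N = ↑((range N).filter (· ∈ A)) := by
    ext n; simp [and_comm]
  rw [Nat.card_coe_set_eq, hA, Set.ncard_coe_finset, natCast_card_filter]
  refine sum_congr rfl fun n hn ↦ ?_
  rw [chiZMod, ZMod.val_cast_of_lt (mem_range.1 hn), Set.indicator_apply]

theorem sum_erase_zero_comp_mul {R M : Type*} [Ring R] [Fintype R] [DecidableEq R]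
    [AddCommGroup M] {c : R} (hc : IsUnit c) (g : R → M) :
    ∑ k ∈ univ.erase 0, g (c * k) = ∑ k ∈ univ.erase 0, g k := by
  obtain ⟨u, rfl⟩ := hc
  rw [sum_erase_eq_sub (mem_univ _), sum_erase_eq_sub (mem_univ _), mul_zero]
  exact congrArg (· - g 0) (Equiv.sum_comp (Units.mulLeft u) g)

theorem norm_sum_mul_mul_le_sum_norm_cube {R : Type*} [Ring R] [Fintype R] [DecidableEq R]
    {c : R} (hc : IsUnit c) (G : R → ℂ) :
    ‖∑ k ∈ univ.erase 0, G k * G (c * k) * G k‖ ≤ ∑ k ∈ univ.erase 0, ‖G k‖ ^ 3 := by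
  have amgm {a b : ℝ} (ha : 0 ≤ a) (hb : 0 ≤ b) : a * b * a ≤ (2 * a ^ 3 + b ^ 3) / 3 := by
    nlinarith [mul_nonneg (sq_nonneg (a - b)) (by positivity : 0 ≤ 2 * a + b)]
  calc ‖∑ k ∈ univ.erase 0, G k * G (c * k) * G k‖
      ≤ ∑ k ∈ univ.erase 0, ‖G k‖ * ‖G (c * k)‖ * ‖G k‖ := by
        simpa only [norm_mul] using norm_sum_le (univ.erase 0) fun k ↦ G k * G (c * k) * G k
    _ ≤ ∑ k ∈ univ.erase 0, (2 * ‖G k‖ ^ 3 + ‖G (c * k)‖ ^ 3) / 3 :=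
        sum_le_sum fun k _ ↦ amgm (norm_nonneg _) (norm_nonneg _)
    _ = ∑ k ∈ univ.erase 0, ‖G k‖ ^ 3 := by
        rw [← sum_div, sum_add_distrib, ← mul_sum, sum_erase_zero_comp_mul hc fun k ↦ ‖G k‖ ^ 3]
        ring

theorem sum_erase_zero_min_val_le (N : ℕ) [NeZero N] {f : ℕ → ℝ} (hf : Summable f)
    (hf0 : ∀ n, 0 ≤ f n) :
    ∑ k ∈ univ.erase (0 : ZMod N), f (min k.val (N - k.val)) ≤ 2 * ∑' n, f n := by
  have hmin (k : ZMod N) (hk : k ≠ 0) : f (min k.val (N - k.val)) ≤ f k.val + f (-k).val := by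
    rw [ZMod.neg_val, if_neg hk]
    rcases min_choice k.val (N - k.val) with h | h <;> rw [h] <;>
      linarith [hf0 k.val, hf0 (N - k.val)]
  have hval (s : Finset (ZMod N)) : ∑ k ∈ s, f k.val ≤ ∑' n, f n := by
    rw [← sum_image fun x _ y _ h ↦ ZMod.val_injective N h]
    exact hf.sum_le_tsum _ fun n _ ↦ hf0 n
  calc ∑ k ∈ univ.erase (0 : ZMod N), f (min k.val (N - k.val))
      ≤ ∑ k ∈ univ.erase (0 : ZMod N), (f k.val + f (-1 * k).val) :=
        sum_le_sum fun k hk ↦ by simpa using hmin k (ne_of_mem_erase hk)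
    _ = 2 * ∑ k ∈ univ.erase (0 : ZMod N), f k.val := by
        rw [sum_add_distrib,
          sum_erase_zero_comp_mul (isUnit_one (M := ZMod N)).neg fun k ↦ f k.val]
        ring
    _ ≤ 2 * ∑' n, f n := by linarith [hval (univ.erase 0)]

theorem mul_rpow_neg_pow_three (x : ℝ) {y : ℝ} (hy : 0 ≤ y) (t : ℝ) :
    (x * y ^ (-t)) ^ 3 = x ^ 3 * y ^ (-(3 * t)) := by
  rw [mul_pow, ← Real.rpow_natCast (y ^ (-t)) 3, ← Real.rpow_mul hy]
  ring_nf

theorem sum_norm_cube_le (N : ℕ) [NeZero N] (G : ZMod N → ℂ) {K t : ℝ} (hK : 0 ≤ K)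
    (ht : 1 < 3 * t) (hG : ∀ k ≠ 0, ‖G k‖ ≤ K * ((min k.val (N - k.val) : ℕ) : ℝ) ^ (-t)) :
    ∑ k ∈ univ.erase 0, ‖G k‖ ^ 3 ≤ 2 * K ^ 3 * ∑' n : ℕ, (n : ℝ) ^ (-(3 * t)) := by
  calc ∑ k ∈ univ.erase 0, ‖G k‖ ^ 3
      ≤ ∑ k ∈ univ.erase (0 : ZMod N), K ^ 3 * ((min k.val (N - k.val) : ℕ) : ℝ) ^ (-(3 * t)) :=
        sum_le_sum fun k hk ↦
          mul_rpow_neg_pow_three K (Nat.cast_nonneg _) t ▸ pow_le_pow_left₀ (norm_nonneg _) (hG k (ne_of_mem_erase hk)) 3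
    _ ≤ K ^ 3 * (2 * ∑' n : ℕ, (n : ℝ) ^ (-(3 * t))) := by
        rw [← mul_sum]
        exact mul_le_mul_of_nonneg_left (sum_erase_zero_min_val_le N
          (Real.summable_nat_rpow.2 (by linarith)) fun n ↦ by positivity) (by positivity)
    _ = 2 * K ^ 3 * ∑' n : ℕ, (n : ℝ) ^ (-(3 * t)) := by ring

theorem isUnit_neg_two_of_odd {N : ℕ} (hN : Odd N) : IsUnit (-2 : ZMod N) := by
  have h2 : IsUnit ((2 : ℕ) : ZMod N) :=
    (ZMod.isUnit_iff_coprime 2 N).2 (Nat.coprime_two_left.2 hN)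
  exact (by simpa using h2 : IsUnit (2 : ZMod N)).neg

theorem re_lambda3_chiZMod_ge (A : Set ℕ) (N : ℕ) [NeZero N] (hN : Odd N) {K t : ℝ}
    (hK : 0 ≤ K) (ht : 1 < 3 * t)
    (hF : ∀ k : ZMod N, k ≠ 0 →
      ‖natFourier A N k.val‖ ≤ K * ((min k.val (N - k.val) : ℕ) : ℝ) ^ (-t)) :
    ((Nat.card ↥(A ∩ Set.Ico 0 N) : ℝ) / N) ^ 3 - 2 * K ^ 3 * ∑' n : ℕ, (n : ℝ) ^ (-(3 * t)) ≤
      (lambda3 N (chiZMod A N) (chiZMod A N) (chiZMod A N)).re := by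
  set F : ZMod N → ℂ := fun k ↦ (N : ℂ)⁻¹ * 𝓕 (chiZMod A N) k
  set R := ∑ k ∈ univ.erase 0, F k * F (-2 * k) * F k
  have hsplit : lambda3 N (chiZMod A N) (chiZMod A N) (chiZMod A N) = F 0 ^ 3 + R := by
    rw [lambda3_eq_sum_dft, ← add_sum_erase _ _ (mem_univ 0)]
    simp only [F, R, neg_mul, mul_zero, neg_zero]
    ring
  have hF0 : F 0 = (((Nat.card ↥(A ∩ Set.Ico 0 N) : ℝ) / N : ℝ) : ℂ) := by
    simp only [F, dft_chiZMod_zero]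
    push_cast
    ring
  have hR : ‖R‖ ≤ 2 * K ^ 3 * ∑' n : ℕ, (n : ℝ) ^ (-(3 * t)) :=
    (norm_sum_mul_mul_le_sum_norm_cube (isUnit_neg_two_of_odd hN) F).trans
      (sum_norm_cube_le N F hK ht fun k hk ↦ by simpa only [F, dft_chiZMod] using hF k hk)
  rw [hsplit, add_re, hF0, ← ofReal_pow, ofReal_re]
  linarith [neg_abs_le R.re, abs_re_le_norm R]

theorem eventually_mul_rpow_le_mul_rpow {a b : ℝ} (hab : a < b) (K : ℝ) {c : ℝ} (hc : 0 < c) :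
    ∀ᶠ n : ℕ in atTop, K * (n : ℝ) ^ a ≤ c * (n : ℝ) ^ b := by
  have hgrow := ((tendsto_rpow_atTop (sub_pos.2 hab)).comp
    tendsto_natCast_atTop_atTop).eventually_ge_atTop (K / c)
  filter_upwards [hgrow, eventually_gt_atTop 0] with n hn hn0
  have hpos : (0 : ℝ) < n := by exact_mod_cast hn0
  have hK : K ≤ c * (n : ℝ) ^ (b - a) := (div_le_iff₀' hc).1 hn
  calc K * (n : ℝ) ^ a ≤ c * (n : ℝ) ^ (b - a) * (n : ℝ) ^ a := by gcongr
    _ = c * (n : ℝ) ^ b := by rw [mul_assoc, ← Real.rpow_add hpos, sub_add_cancel]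

theorem lambda3_lower_bound_general (A : Set ℕ) (δ α : ℝ) (S : Set ℕ)
    (hδ : 0 < δ)
    (hcard : ∀ N ∈ S, (Nat.card ↥(A ∩ Set.Ico 0 N) : ℝ) = δ * (N : ℝ) ^ α)
    (C β : ℝ) (hC : 0 < C) (hβ₁ : 2/3 < β) (hβα : 2 - 2 * α < β)
    (N₁ : ℕ)
    (hFourier : ∀ N ∈ S, N₁ ≤ N → ∀ k : ℕ, 1 ≤ k → k ≤ N - 1 →
      ‖natFourier A N k‖ ≤
        C * ((min k (N - k) * N : ℕ) : ℝ) ^ (-β / 2)) :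
    ∃ c : ℝ, 0 < c ∧ ∃ N₀ : ℕ, ∀ N ∈ S, N₀ ≤ N → Odd N →
      c * (N : ℝ) ^ (3 * α - 3) ≤
        (lambda3 N (chiZMod A N) (chiZMod A N) (chiZMod A N)).re := by
  set T := ∑' n : ℕ, (n : ℝ) ^ (-(3 * (β / 2)))
  obtain ⟨N₂, hN₂⟩ := eventually_atTop.1 (eventually_mul_rpow_le_mul_rpow
    (show -(3 * (β / 2)) < 3 * α - 3 by linarith) (2 * C ^ 3 * T) (c := δ ^ 3 / 2) (by positivity))
  refine ⟨δ ^ 3 / 2, by positivity, max (max N₁ N₂) 1, fun N hNS hN hodd ↦ ?_⟩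
  have : NeZero N := ⟨by omega⟩
  have hNpos : (0 : ℝ) < N := by exact_mod_cast Nat.pos_of_ne_zero (NeZero.ne N)
  have hF (k : ZMod N) (hk : k ≠ 0) : ‖natFourier A N k.val‖ ≤
      C * (N : ℝ) ^ (-(β / 2)) * ((min k.val (N - k.val) : ℕ) : ℝ) ^ (-(β / 2)) := by
    have hk1 : 1 ≤ k.val := Nat.one_le_iff_ne_zero.2 ((ZMod.val_ne_zero k).2 hk)
    have := hFourier N hNS (by omega) k.val hk1 (by have := k.val_lt; omega)
    rwa [Nat.cast_mul, Real.mul_rpow (Nat.cast_nonneg _) hNpos.le, neg_div, mul_comm (_ ^ _),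
      ← mul_assoc] at this
  have hmain : ((Nat.card ↥(A ∩ Set.Ico 0 N) : ℝ) / N) ^ 3 = δ ^ 3 * (N : ℝ) ^ (3 * α - 3) := by
    rw [hcard N hNS, show 3 * α - 3 = (α - 1) * (3 : ℕ) by push_cast; ring,
      Real.rpow_mul hNpos.le, Real.rpow_natCast, Real.rpow_sub_one hNpos.ne']
    ring
  have hlower := re_lambda3_chiZMod_ge A N hodd (by positivity) (by linarith) hF
  rw [hmain, mul_rpow_neg_pow_three C hNpos.le] at hlower
  linarith [hN₂ N (by omega)]

/-- Under the Salem-type hypotheses, `Λ₃(χ_{A_N}, χ_{A_N}, χ_{A_N}) ≥ c N^{3α-3}`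
for all sufficiently large admissible odd `N`. -/
theorem lambda3_lower_bound (A : Set ℕ) (δ α : ℝ) (S : Set ℕ)
    (hδ : 0 < δ) (hα₁ : 1/2 < α) (hα₂ : α ≤ 1)
    (hS : ∀ m : ℕ, ∃ N ∈ S, m ≤ N)
    (hcard : ∀ N ∈ S, (Nat.card ↥(A ∩ Set.Ico 0 N) : ℝ) = δ * (N : ℝ) ^ α)
    (C β : ℝ) (hC : 0 < C) (hβ₁ : 2/3 < β) (hβ₂ : β ≤ 1) (hβα : 2 - 2 * α < β)
    (N₁ : ℕ)
    (hFourier : ∀ N ∈ S, N₁ ≤ N → ∀ k : ℕ, 1 ≤ k → k ≤ N - 1 →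
      ‖natFourier A N k‖ ≤
        C * ((min k (N - k) * N : ℕ) : ℝ) ^ (-β / 2)) :
    ∃ c : ℝ, 0 < c ∧ ∃ N₀ : ℕ, ∀ N ∈ S, N₀ ≤ N → Odd N →
      c * (N : ℝ) ^ (3 * α - 3) ≤
        (lambda3 N (chiZMod A N) (chiZMod A N) (chiZMod A N)).re :=
  lambda3_lower_bound_general A δ α S hδ hcard C β hC hβ₁ hβα N₁ hFourier
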